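/- Let (S, A, H, P, μ) be a finite episodic MDP, π⁺ a deterministic target policy, ε > 0, and set M' := max_{s,a} |μ(s,a)|. Define the white-box attack rewards r̃_h(s,a) = μ(s,a) if a = π⁺_h(s), and r̃_h(s,a) = Q^{π⁺}_h(s, π⁺_h(s)) − E_{s' ~ P(s,a)}[V^{π⁺}_{h+1}(s')] − ε otherwise, where Q^{π⁺}, V^{π⁺} are computed from the true rewards μ. Then the per-step amount of contamination is uniformly bounded: for every h ∈ {1,…,H}, every state s, and every action a, |r̃_h(s,a) − μ(s,a)| ≤ 2(H + 1) · M' + ε. -/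
import Mathlib


open scoped BigOperators

namespace RLAttack

variable {S A : Type*} [Fintype S] [Fintype A]

/-- Expectation of `f` under a `PMF` on a finite type. -/
noncomputable def expVal (p : PMF S) (f : S → ℝ) : ℝ :=
  ∑ s' : S, (p s').toReal * f s'

/-- Auxiliary backward-induction value: `n` steps remaining, current step `h`. -/
noncomputable def valAux (r : ℕ → S → A → ℝ) (P : ℕ → S → A → PMF S)
    (π : ℕ → S → A) : ℕ → ℕ → S → ℝ
  | 0, _, _ => 0
  | n + 1, h, s => r h s (π h s) + expVal (P h s (π h s)) (valAux r P π n (h + 1))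

/-- Value function `V^π_h(s)` for horizon `H`: `V^π_{H+1} = 0` and
`V^π_h(s) = r_h(s, π_h(s)) + E_{s' ~ P_h(s, π_h(s))}[V^π_{h+1}(s')]`. -/
noncomputable def V (H : ℕ) (r : ℕ → S → A → ℝ) (P : ℕ → S → A → PMF S)
    (π : ℕ → S → A) (h : ℕ) (s : S) : ℝ :=
  valAux r P π (H + 1 - h) h s

/-- Q-value function `Q^π_h(s,a) = r_h(s,a) + E_{s' ~ P_h(s,a)}[V^π_{h+1}(s')]`. -/
noncomputable def Q (H : ℕ) (r : ℕ → S → A → ℝ) (P : ℕ → S → A → PMF S)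
    (π : ℕ → S → A) (h : ℕ) (s : S) (a : A) : ℝ :=
  r h s a + expVal (P h s a) (fun s' => V H r P π (h + 1) s')



/-- White-box attack rewards: unchanged on the target action, and
`Q^{π⁺}_h(s,π⁺_h(s)) − E_{s'~P(s,a)}[V^{π⁺}_{h+1}(s')] − ε` otherwise, where `Q^{π⁺}`
and `V^{π⁺}` are computed from the true rewards `μ`. -/
noncomputable def rWB [DecidableEq A] (H : ℕ) (μ : S → A → ℝ) (P : S → A → PMF S)
    (πp : ℕ → S → A) (ε : ℝ) : ℕ → S → A → ℝ :=
  fun h s a =>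
    if a = πp h s then μ s a
    else Q H (fun _ s a => μ s a) (fun _ => P) πp h s (πp h s)
      - expVal (P s a) (fun s' => V H (fun _ s a => μ s a) (fun _ => P) πp (h + 1) s')
      - ε

lemma sum_pmf_toReal (p : PMF S) : ∑ s' : S, (p s').toReal = 1 := by
  have h1 : ∑' s' : S, p s' = 1 := p.tsum_coe
  rw [tsum_fintype] at h1
  have : ((∑ s' : S, p s' : ENNReal)).toReal = (1 : ENNReal).toReal := by rw [h1]
  rw [ENNReal.toReal_sum (fun s _ => (p.apply_ne_top s))] at this
  simpa using this

lemma abs_expVal_le (p : PMF S) (f : S → ℝ) (C : ℝ) (hf : ∀ s, |f s| ≤ C) :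
    |expVal p f| ≤ C := by
  calc |expVal p f| ≤ ∑ s' : S, |(p s').toReal * f s'| := Finset.abs_sum_le_sum_abs _ _
    _ ≤ ∑ s' : S, (p s').toReal * C := by
        apply Finset.sum_le_sum
        intro s _
        rw [abs_mul, abs_of_nonneg ENNReal.toReal_nonneg]
        exact mul_le_mul_of_nonneg_left (hf s) ENNReal.toReal_nonneg
    _ = C := by rw [← Finset.sum_mul, sum_pmf_toReal, one_mul]

lemma abs_valAux_le (r : ℕ → S → A → ℝ) (P : ℕ → S → A → PMF S)
    (π : ℕ → S → A) (M : ℝ) (hM : ∀ h s a, |r h s a| ≤ M) :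
    ∀ n h s, |valAux r P π n h s| ≤ n * M := by
  intro n
  induction n with
  | zero => intro h s; simp [valAux]
  | succ n ih =>
    intro h s
    have hE : |expVal (P h s (π h s)) (valAux r P π n (h + 1))| ≤ n * M :=
      abs_expVal_le _ _ _ (fun s' => ih (h + 1) s')
    calc |valAux r P π (n+1) h s|
        ≤ |r h s (π h s)| + |expVal (P h s (π h s)) (valAux r P π n (h + 1))| :=
          abs_add_le _ _
      _ ≤ M + n * M := add_le_add (hM _ _ _) hE
      _ = (n + 1 : ℕ) * M := by push_cast; ring

/-- With `M' := max_{s,a} |μ(s,a)|`, the per-step contamination of the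
white-box attack is uniformly bounded: for every `h ∈ {1,…,H}`, state `s` and action `a`,
`|r̃_h(s,a) − μ(s,a)| ≤ 2(H+1)·M' + ε`. -/
theorem statement16 {S A : Type*} [Fintype S] [Fintype A] [Nonempty S] [Nonempty A]
    [DecidableEq A]
    (H : ℕ) (hH : 1 ≤ H) (P : S → A → PMF S) (μ : S → A → ℝ)
    (πp : ℕ → S → A) (ε : ℝ) (hε : 0 < ε) :
    ∀ h ∈ Finset.Icc 1 H, ∀ s : S, ∀ a : A,
      |rWB H μ P πp ε h s a - μ s a|
        ≤ 2 * ((H : ℝ) + 1) *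
            (Finset.univ : Finset (S × A)).sup' Finset.univ_nonempty
              (fun p => |μ p.1 p.2|)
          + ε := by
  intro h hh s a
  set M : ℝ := (Finset.univ : Finset (S × A)).sup' Finset.univ_nonempty
      (fun p => |μ p.1 p.2|) with hMdef
  have hM : ∀ s a, |μ s a| ≤ M := fun s a =>
    Finset.le_sup' (f := fun p : S × A => |μ p.1 p.2|) (Finset.mem_univ (s, a))
  have hM0 : 0 ≤ M := le_trans (abs_nonneg _) (hM s a)
  have hVal : ∀ n h' s', |valAux (fun _ s a => μ s a) (fun _ => P) πp n h' s'| ≤ n * M :=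
    abs_valAux_le _ _ _ M (fun _ s a => hM s a)
  by_cases ha : a = πp h s
  · simp only [rWB, if_pos ha, sub_self, abs_zero]
    positivity
  · simp only [rWB, if_neg ha]
    have hVb : ∀ s', |V H (fun _ s a => μ s a) (fun _ => P) πp (h + 1) s'| ≤ H * M := by
      intro s'
      refine le_trans (hVal (H + 1 - (h + 1)) (h + 1) s') ?_
      have : ((H + 1 - (h + 1) : ℕ) : ℝ) ≤ H := by
        exact_mod_cast Nat.sub_le_of_le_add (by omega)
      exact mul_le_mul_of_nonneg_right this hM0
    have hE1 : |expVal (P s (πp h s))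
        (fun s' => V H (fun _ s a => μ s a) (fun _ => P) πp (h + 1) s')| ≤ H * M :=
      abs_expVal_le _ _ _ hVb
    have hE2 : |expVal (P s a)
        (fun s' => V H (fun _ s a => μ s a) (fun _ => P) πp (h + 1) s')| ≤ H * M :=
      abs_expVal_le _ _ _ hVb
    have hQ : |Q H (fun _ s a => μ s a) (fun _ => P) πp h s (πp h s)| ≤ M + H * M :=
      le_trans (abs_add_le _ _) (add_le_add (hM _ _) hE1)
    calc |Q H (fun _ s a => μ s a) (fun _ => P) πp h s (πp h s)
          - expVal (P s a) (fun s' => V H (fun _ s a => μ s a) (fun _ => P) πp (h + 1) s')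
          - ε - μ s a|
        ≤ |Q H (fun _ s a => μ s a) (fun _ => P) πp h s (πp h s)|
          + |expVal (P s a) (fun s' => V H (fun _ s a => μ s a) (fun _ => P) πp (h + 1) s')|
          + |ε| + |μ s a| := by
          refine le_trans (abs_sub _ _) (add_le_add ?_ le_rfl)
          exact le_trans (abs_sub _ _) (add_le_add (le_trans (abs_sub _ _) le_rfl) le_rfl)
      _ ≤ (M + H * M) + H * M + ε + M := by
          refine add_le_add (add_le_add (add_le_add hQ hE2) ?_) (hM s a)
          rw [abs_of_pos hε]
      _ = 2 * ((H : ℝ) + 1) * M + ε := by ring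

end RLAttack
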